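/- (1) For every z ∈ [0,∞)^d, the recursive max-linear values x on 𝒟 satisfy x_i = max( max_{k ∈ pa^B(i)} (b_{ki}/b_{kk}) x_k , b_{ii} z_i ) for every i ∈ V, where pa^B(i) denotes the parents of i in 𝒟^B; thus the model is a recursive max-linear model on 𝒟^B with the uniquely determined weights c_{ki} = b_{ki}/b_{kk} (k ∈ pa^B(i)) and c_{ii} = b_{ii}. (2) If 𝒟' = (V,E') is any DAG with positive weights c'_{ki} ((k,i) ∈ E') and c'_{ii} (i ∈ V) such that for every z ∈ [0,∞)^d the recursive max-linear values x' on 𝒟' satisfy x'_i = max_{j∈V} b_{ji} z_j for all i, then E^B ⊆ E', c'_{ii} = b_{ii} for all i, and c'_{ki} = b_{ki}/b_{kk} for all (k,i) ∈ E^B; hence 𝒟^B is the DAG with the minimum number of edges representing the model. -/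

import Mathlib

/-!
Extending max-weighted paths by their last edge shows that the ML coefficient matrix solves
`b j i = max_{k ∈ pa(i)} b j k * c k i` for `j ≠ i`. Hence `x i = max_j b j i * z j`, and
`b j k * b k i ≤ b j i * b k k`; say that `(j, i)` passes through `k` when equality holds.
If `b j i > 0`, then `(j, i)` passes through some parent `k` of `i`. When `(k, i)` is not an edge
of `𝒟^B`, `(k, i)` passes through a parent `l ∈ de(k)` of `i`, and then so does `(j, i)`.
Descending in this way ends at an edge of `𝒟^B`, which gives (1).

For (2), the unit noise `z = e_t` makes the row `b t` a solution on `𝒟'`, so it is supported on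
`t` and its descendants in `𝒟'`; this forces `c' i i = b i i`. For `(k, i) ∈ E^B`, the parent `l` of
`i` in `𝒟'` attaining `b k i = c' l i * b k l` must be `k`: otherwise `(k, i)` passes through `l`,
hence through the parent of `i` in `𝒟` that `(l, i)` passes through, against minimality.
-/

open scoped NNReal ENNReal Classical

namespace MaxLinearDAG

variable {d : ℕ}

/-- `p` is a directed path (with at least one edge) from `j` to `i` in the edge relation `E`. -/
def PathFrom (E : Fin d → Fin d → Prop) (j i : Fin d) (p : List (Fin d)) : Prop :=
  2 ≤ p.length ∧ p.head? = some j ∧ p.getLast? = some i ∧ List.Chain' E p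

/-- The directed graph given by `E` is acyclic: no directed path from a node to itself. -/
def Acyclic (E : Fin d → Fin d → Prop) : Prop :=
  ∀ i, ¬ ∃ p, PathFrom E i i p

/-- `j` is an ancestor of `i`: there is a path from `j` to `i`. -/
def anc (E : Fin d → Fin d → Prop) (j i : Fin d) : Prop :=
  ∃ p, PathFrom E j i p

/-- The weight of a path `p` starting at `j`: `c j j` times the product of the
edge weights along `p`. -/
noncomputable def pathWeight (c : Fin d → Fin d → ℝ≥0) (j : Fin d) (p : List (Fin d)) : ℝ≥0 :=
  c j j * ((p.zip p.tail).map fun q => c q.1 q.2).prod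

/-- `b` is the max-linear coefficient matrix of the recursive ML model on `(E, c)`:
for `j ∈ an(i)`, `b j i` is the (attained) maximum of the path weights over all paths
from `j` to `i`; `b i i = c i i`; and `b j i = 0` for `j ∉ An(i)`. -/
def IsMLMatrix (E : Fin d → Fin d → Prop) (c b : Fin d → Fin d → ℝ≥0) : Prop :=
  (∀ i, b i i = c i i) ∧
  (∀ j i, j ≠ i → ¬ anc E j i → b j i = 0) ∧
  (∀ j i p, PathFrom E j i p → pathWeight c j p ≤ b j i) ∧
  (∀ j i, anc E j i → ∃ p, PathFrom E j i p ∧ pathWeight c j p = b j i)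

/-- `x` is the vector of recursive max-linear values on `(E, c)` for noise `z`:
`x i = max (max_{k ∈ pa(i)} c k i * x k) (c i i * z i)`, empty max being `0`. -/
def IsRecML (E : Fin d → Fin d → Prop) (c : Fin d → Fin d → ℝ≥0) (z x : Fin d → ℝ≥0) : Prop :=
  ∀ i, x i = (Finset.univ.sup fun k => if E k i then c k i * x k else 0) ⊔ c i i * z i

/-- Max-times matrix product `F ⊙ G`. -/
noncomputable def mprod (F G : Fin d → Fin d → ℝ≥0) : Fin d → Fin d → ℝ≥0 :=
  fun i j => Finset.univ.sup fun k => F i k * G k j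

/-- Max-times matrix power, `mpow A 0` being the identity matrix. -/
noncomputable def mpow (A : Fin d → Fin d → ℝ≥0) : ℕ → Fin d → Fin d → ℝ≥0
  | 0 => fun i j => if i = j then 1 else 0
  | n + 1 => mprod (mpow A n) A

/-- `p` is a max-weighted path from `j` to `i`. -/
def MaxWeighted (E : Fin d → Fin d → Prop) (c b : Fin d → Fin d → ℝ≥0)
    (j i : Fin d) (p : List (Fin d)) : Prop :=
  PathFrom E j i p ∧ pathWeight c j p = b j i

/-- The lowest max-weighted ancestors of `i` in `U`: nodes `j ∈ An(i) ∩ U` such that no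
max-weighted path from `j` to `i` passes through a node of `U \ {j}`. -/
def AnLow (E : Fin d → Fin d → Prop) (c b : Fin d → Fin d → ℝ≥0)
    (U : Set (Fin d)) (i : Fin d) : Set (Fin d) :=
  {j | (anc E j i ∨ j = i) ∧ j ∈ U ∧
    ∀ p, MaxWeighted E c b j i p → ¬ ∃ u ∈ U \ {j}, u ∈ p}

/-- The highest max-weighted descendants of `i` in `U`: nodes `l ∈ De(i) ∩ U` such that no
max-weighted path from `i` to `l` passes through a node of `U \ {l}`. -/
def DeHigh (E : Fin d → Fin d → Prop) (c b : Fin d → Fin d → ℝ≥0)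
    (U : Set (Fin d)) (i : Fin d) : Set (Fin d) :=
  {l | (anc E i l ∨ l = i) ∧ l ∈ U ∧
    ∀ p, MaxWeighted E c b i l p → ¬ ∃ u ∈ U \ {l}, u ∈ p}

variable {E : Fin d → Fin d → Prop} {c b : Fin d → Fin d → ℝ≥0} {i j k l t : Fin d}

def IsWalk (E : Fin d → Fin d → Prop) (j i : Fin d) (p : List (Fin d)) : Prop :=
  p.head? = some j ∧ p.getLast? = some i ∧ List.IsChain E p

noncomputable def edgeWeight (c : Fin d → Fin d → ℝ≥0) (p : List (Fin d)) : ℝ≥0 :=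
  ((p.zip p.tail).map fun e => c e.1 e.2).prod

lemma edgeWeight_snoc (c : Fin d → Fin d → ℝ≥0) :
    ∀ {p : List (Fin d)} {k : Fin d} (i : Fin d), p.getLast? = some k →
      edgeWeight c (p ++ [i]) = edgeWeight c p * c k i
  | [], _, _, h => by simp at h
  | [a], _, _, h => by
      obtain rfl : a = _ := by simpa using h
      simp [edgeWeight]
  | a :: a' :: p, k, i, h => by
      have ih := edgeWeight_snoc c (p := a' :: p) i (by simpa using h)
      simp only [edgeWeight, List.cons_append, List.tail_cons, List.zip_cons_cons,
        List.map_cons, List.prod_cons] at ih ⊢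
      rw [ih, mul_assoc]

lemma pathWeight_snoc {p : List (Fin d)} (hp : p.getLast? = some k) (i : Fin d) :
    pathWeight c j (p ++ [i]) = pathWeight c j p * c k i := by
  change c j j * edgeWeight c (p ++ [i]) = c j j * edgeWeight c p * c k i
  rw [edgeWeight_snoc c i hp, mul_assoc]

lemma IsWalk.snoc {p : List (Fin d)} (hp : IsWalk E j k p) (hki : E k i) :
    PathFrom E j i (p ++ [i]) := by
  obtain ⟨hh, hl, hc⟩ := hp
  have hne : p ≠ [] := by rintro rfl; simp at hh
  refine ⟨?_, by rwa [List.head?_append_of_ne_nil _ hne], by simp, ?_⟩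
  · have := List.length_pos_iff.2 hne
    simp only [List.length_append, List.length_singleton]
    omega
  · exact List.IsChain.append hc (List.isChain_singleton i) (by simp [hl, hki])

lemma PathFrom.exists_snoc {p : List (Fin d)} (hp : PathFrom E j i p) :
    ∃ q k, IsWalk E j k q ∧ E k i ∧ p = q ++ [i] := by
  obtain ⟨hlen, hh, hl, hc⟩ := hp
  obtain ⟨q, a, rfl⟩ : ∃ q a, p = q ++ [a] := by
    rcases List.eq_nil_or_concat' p with rfl | h
    · simp at hlen
    · exact h
  have hq : q ≠ [] := by rintro rfl; simp at hlen
  obtain rfl : a = i := by simpa using hl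
  obtain ⟨hcq, -, hedge⟩ := List.isChain_append.1 hc
  refine ⟨q, q.getLast hq, ⟨?_, List.getLast?_eq_some_getLast hq, hcq⟩, ?_, rfl⟩
  · rwa [List.head?_append_of_ne_nil _ hq] at hh
  · exact hedge _ (by simp [List.getLast?_eq_some_getLast hq]) _ rfl

lemma anc_iff_transGen : anc E j i ↔ Relation.TransGen E j i := by
  constructor
  · rintro ⟨_ | ⟨a, _ | ⟨a', p⟩⟩, hlen, hh, hl, hc⟩ <;> simp at hlen
    obtain rfl : a = j := by simpa using hh
    rw [List.Chain', List.isChain_cons_cons] at hc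
    exact .head' hc.1 (List.relationReflTransGen_of_exists_isChain_cons p hc.2
      (by simpa [List.getLast?_eq_some_getLast] using hl))
  · intro h
    obtain ⟨a, hja, hai⟩ := Relation.TransGen.head'_iff.1 h
    obtain ⟨p, hc, hl⟩ := List.exists_isChain_cons_of_relationReflTransGen hai
    exact ⟨j :: a :: p, by simp, rfl, by simp [List.getLast?_eq_some_getLast, ← hl],
      List.isChain_cons_cons.2 ⟨hja, hc⟩⟩

lemma anc_of_edge (h : E j i) : anc E j i :=
  anc_iff_transGen.2 (.single h)

lemma anc.trans (hjk : anc E j k) (hki : anc E k i) : anc E j i :=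
  anc_iff_transGen.2 ((anc_iff_transGen.1 hjk).trans (anc_iff_transGen.1 hki))

lemma Acyclic.ne_of_edge (hE : Acyclic E) (h : E k i) : k ≠ i := by
  rintro rfl
  exact hE k (anc_of_edge h)

lemma Acyclic.wellFounded (hE : Acyclic E) : WellFounded (anc E) :=
  haveI : IsTrans (Fin d) (anc E) := ⟨fun _ _ _ => anc.trans⟩
  haveI : Std.Irrefl (anc E) := ⟨hE⟩
  Finite.wellFounded_of_trans_of_irrefl _

lemma Acyclic.wellFounded_flip (hE : Acyclic E) : WellFounded (flip (anc E)) :=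
  haveI : IsTrans (Fin d) (flip (anc E)) := ⟨fun _ _ _ h h' => anc.trans h' h⟩
  haveI : Std.Irrefl (flip (anc E)) := ⟨hE⟩
  Finite.wellFounded_of_trans_of_irrefl _

-- `k` lies on a max-weighted path from `j` to `i` (when `b j i ≠ 0`).
def PassesThrough (b : Fin d → Fin d → ℝ≥0) (j k i : Fin d) : Prop :=
  b j i * b k k = b j k * b k i

lemma PassesThrough.ne_zero (h : PassesThrough b j k i) (hji : b j i ≠ 0) (hk : b k k ≠ 0) :
    b j k ≠ 0 ∧ b k i ≠ 0 := by
  have : b j k * b k i ≠ 0 := h ▸ mul_ne_zero hji hk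
  exact ⟨left_ne_zero_of_mul this, right_ne_zero_of_mul this⟩

lemma PassesThrough.eq_div_mul (h : PassesThrough b j k i) (hk : b k k ≠ 0) :
    b j i = b k i / b k k * b j k := by
  rw [div_mul_eq_mul_div, eq_div_iff hk, h, mul_comm]

-- The edge set `E^B` of `𝒟^B`, written exactly as `edgeB` in `stmt11`; an `abbrev`, so that
-- `if MinEdge E b k i` elaborates with the same `Decidable` instance as `if edgeB k i`.
abbrev MinEdge (E : Fin d → Fin d → Prop) (b : Fin d → Fin d → ℝ≥0) (k i : Fin d) : Prop :=
  E k i ∧ (Finset.univ.sup fun l =>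
    if anc E k l ∧ E l i then b k l * b l i / b l l else 0) < b k i

namespace IsMLMatrix

lemma diag (hb : IsMLMatrix E c b) (i : Fin d) : b i i = c i i := hb.1 i

lemma diag_ne_zero (hb : IsMLMatrix E c b) (hcd : ∀ i, 0 < c i i) (i : Fin d) : b i i ≠ 0 :=
  hb.diag i ▸ (hcd i).ne'

lemma anc_of_ne_zero (hb : IsMLMatrix E c b) (h : b j i ≠ 0) (hji : j ≠ i) : anc E j i := by
  by_contra hn
  exact h (hb.2.1 j i hji hn)

lemma eq_or_anc_of_ne_zero (hb : IsMLMatrix E c b) (h : b j i ≠ 0) : j = i ∨ anc E j i :=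
  (eq_or_ne j i).imp_right (hb.anc_of_ne_zero h)

lemma pathWeight_le_of_isWalk (hb : IsMLMatrix E c b) {p : List (Fin d)} (hp : IsWalk E j i p) :
    pathWeight c j p ≤ b j i := by
  by_cases hlen : 2 ≤ p.length
  · exact hb.2.2.1 j i p ⟨hlen, hp⟩
  obtain ⟨hh, hl, -⟩ := hp
  rcases p with _ | ⟨a, _ | ⟨a', p⟩⟩
  · simp at hh
  · obtain rfl : a = j := by simpa using hh
    obtain rfl : a = i := by simpa using hl
    simp [pathWeight, hb.diag]
  · simp at hlen

lemma exists_isWalk_pathWeight_eq (hb : IsMLMatrix E c b) (h : b j i ≠ 0) :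
    ∃ p, IsWalk E j i p ∧ pathWeight c j p = b j i := by
  rcases hb.eq_or_anc_of_ne_zero h with rfl | hji
  · exact ⟨[j], ⟨rfl, rfl, List.isChain_singleton j⟩, by simp [pathWeight, hb.diag]⟩
  · obtain ⟨p, hp, hw⟩ := hb.2.2.2 j i hji
    exact ⟨p, hp.2, hw⟩

lemma mul_edge_le (hb : IsMLMatrix E c b) (hki : E k i) (j : Fin d) :
    b j k * c k i ≤ b j i := by
  by_cases h : b j k = 0
  · simp [h]
  obtain ⟨p, hp, hw⟩ := hb.exists_isWalk_pathWeight_eq h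
  rw [← hw, ← pathWeight_snoc hp.2.1]
  exact hb.2.2.1 j i _ (hp.snoc hki)

lemma exists_edge_eq_mul (hb : IsMLMatrix E c b) (h : b j i ≠ 0) (hji : j ≠ i) :
    ∃ k, E k i ∧ b j i = b j k * c k i := by
  obtain ⟨p, hp, hw⟩ := hb.2.2.2 j i (hb.anc_of_ne_zero h hji)
  obtain ⟨q, k, hq, hki, rfl⟩ := hp.exists_snoc
  refine ⟨k, hki, le_antisymm ?_ (hb.mul_edge_le hki j)⟩
  rw [← hw, pathWeight_snoc hq.2.1]
  gcongr
  exact hb.pathWeight_le_of_isWalk hq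

lemma mul_le_mul_diag (hb : IsMLMatrix E c b) (hE : Acyclic E) (j k i : Fin d) :
    b j k * b k i ≤ b j i * b k k := by
  induction i using hE.wellFounded.induction with
  | _ i ih =>
  rcases eq_or_ne k i with rfl | hki
  · rw [mul_comm]
  by_cases h : b k i = 0
  · simp [h]
  obtain ⟨m, hmi, hm⟩ := hb.exists_edge_eq_mul h hki
  calc b j k * b k i = b j k * b k m * c m i := by rw [hm, mul_assoc]
    _ ≤ b j m * b k k * c m i := mul_le_mul_left (ih m (anc_of_edge hmi)) _
    _ = b j m * c m i * b k k := by ring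
    _ ≤ b j i * b k k := by gcongr; exact hb.mul_edge_le hmi j

lemma div_mul_le (hb : IsMLMatrix E c b) (hE : Acyclic E) (j k i : Fin d) :
    b k i / b k k * b j k ≤ b j i := by
  rcases eq_or_ne (b k k) 0 with h | h
  · simp [h]
  rw [div_mul_eq_mul_div, div_le_iff₀ (pos_iff_ne_zero.2 h), mul_comm]
  exact hb.mul_le_mul_diag hE j k i

lemma passesThrough_of_eq_mul (hb : IsMLMatrix E c b) (hE : Acyclic E) (hki : E k i)
    (h : b j i = b j k * c k i) : PassesThrough b j k i := by
  refine le_antisymm ?_ (hb.mul_le_mul_diag hE j k i)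
  calc b j i * b k k = b j k * (b k k * c k i) := by rw [h]; ring
    _ ≤ b j k * b k i := by gcongr; exact hb.mul_edge_le hki k

lemma exists_edge_passesThrough (hb : IsMLMatrix E c b) (hE : Acyclic E) (h : b j i ≠ 0)
    (hji : j ≠ i) : ∃ k, E k i ∧ PassesThrough b j k i := by
  obtain ⟨k, hki, hk⟩ := hb.exists_edge_eq_mul h hji
  exact ⟨k, hki, hb.passesThrough_of_eq_mul hE hki hk⟩

lemma passesThrough_trans (hb : IsMLMatrix E c b) (hE : Acyclic E)
    (hjk : PassesThrough b j k i) (hkl : PassesThrough b k l i) (hk : b k k ≠ 0) :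
    PassesThrough b j l i := by
  refine le_antisymm (le_of_mul_le_mul_right ?_ (pos_iff_ne_zero.2 hk))
    (hb.mul_le_mul_diag hE j l i)
  calc b j i * b l l * b k k = b j k * (b k i * b l l) := by
        rw [mul_right_comm, hjk, mul_assoc]
    _ = b j k * b k l * b l i := by rw [hkl, mul_assoc]
    _ ≤ b j l * b k k * b l i := mul_le_mul_left (hb.mul_le_mul_diag hE j k l) _
    _ = b j l * b l i * b k k := by ring

lemma minEdge_iff (hb : IsMLMatrix E c b) (hE : Acyclic E) (hcd : ∀ i, 0 < c i i)
    (hki : E k i) (h : b k i ≠ 0) :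
    MinEdge E b k i ↔ ∀ l, anc E k l → E l i → ¬ PassesThrough b k l i := by
  simp only [MinEdge, hki, true_and, Finset.sup_lt_iff (bot_lt_iff_ne_bot.2 h),
    Finset.mem_univ, true_implies]
  refine forall_congr' fun l => ?_
  by_cases hl : anc E k l ∧ E l i
  · rw [if_pos hl, div_lt_iff₀ (pos_iff_ne_zero.2 (hb.diag_ne_zero hcd l)), PassesThrough,
      lt_iff_le_and_ne, and_iff_right (hb.mul_le_mul_diag hE k l i), ne_comm]
    simp [hl]
  · simp only [if_neg hl, pos_iff_ne_zero.2 h, true_iff]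
    exact fun hkl hli => absurd ⟨hkl, hli⟩ hl

lemma exists_minEdge_passesThrough (hb : IsMLMatrix E c b) (hE : Acyclic E)
    (hcd : ∀ i, 0 < c i i) (h : b j i ≠ 0) (hji : j ≠ i) :
    ∃ k, MinEdge E b k i ∧ PassesThrough b j k i := by
  obtain ⟨k, hki, hjk⟩ := hb.exists_edge_passesThrough hE h hji
  induction k using hE.wellFounded_flip.induction with
  | _ k ih =>
  by_cases hmin : MinEdge E b k i
  · exact ⟨k, hmin, hjk⟩
  have hk : b k i ≠ 0 := (hjk.ne_zero h (hb.diag_ne_zero hcd k)).2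
  obtain ⟨l, hkl, hli, hkli⟩ : ∃ l, anc E k l ∧ E l i ∧ PassesThrough b k l i := by
    simpa [hb.minEdge_iff hE hcd hki hk] using hmin
  exact ih l hkl hli (hb.passesThrough_trans hE hjk hkli (hb.diag_ne_zero hcd k))

end IsMLMatrix

section RecML

variable {z x : Fin d → ℝ≥0}

lemma IsRecML.mul_le (hx : IsRecML E c z x) (hki : E k i) : c k i * x k ≤ x i := by
  rw [hx i]
  exact le_sup_of_le_left (Finset.le_sup_of_le (Finset.mem_univ k) (by rw [if_pos hki]))

lemma IsRecML.eq_or_exists_edge_eq (hx : IsRecML E c z x) (i : Fin d) :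
    x i = c i i * z i ∨ ∃ k, E k i ∧ x i = c k i * x k := by
  obtain ⟨k, -, hk⟩ := Finset.exists_mem_eq_sup Finset.univ ⟨i, Finset.mem_univ i⟩
    fun k => if E k i then c k i * x k else 0
  have h := hx i
  rw [hk] at h
  split_ifs at h with hki
  · rcases le_total (c k i * x k) (c i i * z i) with hle | hle
    · exact .inl (by rwa [sup_eq_right.2 hle] at h)
    · exact .inr ⟨k, hki, by rwa [sup_eq_left.2 hle] at h⟩
  · exact .inl (by simpa using h)

lemma IsRecML.exists_anc_of_ne_zero (hE : Acyclic E) (hx : IsRecML E c z x) (i : Fin d)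
    (h : x i ≠ 0) : ∃ j, z j ≠ 0 ∧ (j = i ∨ anc E j i) := by
  induction i using hE.wellFounded.induction with
  | _ i ih =>
  rcases hx.eq_or_exists_edge_eq i with hi | ⟨k, hki, hi⟩
  · exact ⟨i, right_ne_zero_of_mul (hi ▸ h), .inl rfl⟩
  · obtain ⟨j, hj, hjk⟩ := ih k (anc_of_edge hki) (right_ne_zero_of_mul (hi ▸ h))
    refine ⟨j, hj, .inr ?_⟩
    rcases hjk with rfl | hjk
    · exact anc_of_edge hki
    · exact hjk.trans (anc_of_edge hki)

theorem IsRecML.eq_sup_mul (hE : Acyclic E) (hb : IsMLMatrix E c b) (hx : IsRecML E c z x) :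
    x = fun i => Finset.univ.sup fun j => b j i * z j := by
  funext i
  induction i using hE.wellFounded.induction with
  | _ i ih =>
  rw [hx i]
  apply le_antisymm
  · refine sup_le (Finset.sup_le fun k _ => ?_) ?_
    · split_ifs with hki
      · rw [ih k (anc_of_edge hki), NNReal.mul_finset_sup]
        refine Finset.sup_mono_fun fun j _ => ?_
        rw [← mul_assoc, mul_comm (c k i)]
        exact mul_le_mul_left (hb.mul_edge_le hki j) _
      · exact zero_le
    · rw [← hb.diag]
      exact Finset.le_sup (f := fun j => b j i * z j) (Finset.mem_univ i)
  · refine Finset.sup_le fun j _ => ?_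
    rcases eq_or_ne j i with rfl | hji
    · rw [hb.diag]
      exact le_sup_right
    by_cases h : b j i = 0
    · simp [h]
    obtain ⟨k, hki, hk⟩ := hb.exists_edge_eq_mul h hji
    refine le_sup_of_le_left (Finset.le_sup_of_le (Finset.mem_univ k) ?_)
    rw [if_pos hki, ih k (anc_of_edge hki), hk, mul_right_comm, mul_comm _ (c k i)]
    exact mul_le_mul_right (Finset.le_sup (f := fun j => b j k * z j) (Finset.mem_univ j)) _

theorem IsRecML.eq_sup_minEdge (hE : Acyclic E) (hcd : ∀ i, 0 < c i i)
    (hb : IsMLMatrix E c b) (hx : IsRecML E c z x) (i : Fin d) :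
    x i = (Finset.univ.sup fun k => if MinEdge E b k i then (b k i / b k k) * x k else 0) ⊔
      b i i * z i := by
  obtain rfl := hx.eq_sup_mul hE hb
  apply le_antisymm
  · refine Finset.sup_le fun j _ => ?_
    rcases eq_or_ne j i with rfl | hji
    · exact le_sup_right
    by_cases h : b j i = 0
    · simp [h]
    obtain ⟨k, hki, hjk⟩ := hb.exists_minEdge_passesThrough hE hcd h hji
    refine le_sup_of_le_left (Finset.le_sup_of_le (Finset.mem_univ k) ?_)
    rw [if_pos hki, hjk.eq_div_mul (hb.diag_ne_zero hcd k), mul_assoc]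
    exact mul_le_mul_right (Finset.le_sup (f := fun j => b j k * z j) (Finset.mem_univ j)) _
  · refine sup_le (Finset.sup_le fun k _ => ?_)
      (Finset.le_sup (f := fun j => b j i * z j) (Finset.mem_univ i))
    split_ifs
    · rw [NNReal.mul_finset_sup]
      refine Finset.sup_mono_fun fun j _ => ?_
      rw [← mul_assoc]
      exact mul_le_mul_left (hb.div_mul_le hE j k i) _
    · exact zero_le

end RecML

section Representation

variable {E' : Fin d → Fin d → Prop} {c' : Fin d → Fin d → ℝ≥0}

lemma isRecML_row_of_forall
    (hrep : ∀ z, IsRecML E' c' z fun i => Finset.univ.sup fun j => b j i * z j) (t : Fin d) :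
    IsRecML E' c' (Pi.single t 1) (b t) := by
  have h : (fun i => Finset.univ.sup fun j => b j i * (Pi.single t 1 : Fin d → ℝ≥0) j) = b t := by
    funext i
    refine le_antisymm (Finset.sup_le fun j _ => ?_)
      (Finset.le_sup_of_le (Finset.mem_univ t) (by simp))
    rcases eq_or_ne j t with rfl | hjt <;> simp [*]
  exact h ▸ hrep (Pi.single t 1)

lemma eq_or_anc_of_forall_isRecML (hE' : Acyclic E')
    (hrep : ∀ z, IsRecML E' c' z fun i => Finset.univ.sup fun j => b j i * z j)
    (h : b t i ≠ 0) : t = i ∨ anc E' t i := by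
  obtain ⟨j, hj, hji⟩ := (isRecML_row_of_forall hrep t).exists_anc_of_ne_zero hE' i h
  obtain rfl : j = t := by
    by_contra hjt
    simp [hjt] at hj
  exact hji

lemma diag_eq_of_forall_isRecML (hE' : Acyclic E') (hcd : ∀ i, 0 < c i i)
    (hb : IsMLMatrix E c b)
    (hrep : ∀ z, IsRecML E' c' z fun i => Finset.univ.sup fun j => b j i * z j) (i : Fin d) :
    c' i i = b i i := by
  rcases (isRecML_row_of_forall hrep i).eq_or_exists_edge_eq i with h | ⟨k, hki, h⟩
  · simpa using h.symm
  have hik : b i k ≠ 0 := right_ne_zero_of_mul (h ▸ hb.diag_ne_zero hcd i)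
  rcases eq_or_anc_of_forall_isRecML hE' hrep hik with rfl | hanc
  · exact absurd rfl (hE'.ne_of_edge hki)
  · exact absurd (hanc.trans (anc_of_edge hki)) (hE' i)

lemma MinEdge.edge_and_eq_of_forall_isRecML (hE : Acyclic E) (hcd : ∀ i, 0 < c i i)
    (hb : IsMLMatrix E c b) (hE' : Acyclic E')
    (hrep : ∀ z, IsRecML E' c' z fun i => Finset.univ.sup fun j => b j i * z j)
    (hmin : MinEdge E b k i) : E' k i ∧ c' k i = b k i / b k k := by
  have hki := hmin.1
  have hk : b k i ≠ 0 := (lt_of_le_of_lt (zero_le) hmin.2).ne'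
  obtain ⟨l, hli, hl⟩ : ∃ l, E' l i ∧ b k i = c' l i * b k l := by
    refine ((isRecML_row_of_forall hrep k).eq_or_exists_edge_eq i).resolve_left fun h => hk ?_
    simpa [(hE.ne_of_edge hki).symm] using h
  have hkl : b k l ≠ 0 := right_ne_zero_of_mul (hl ▸ hk)
  rcases eq_or_ne k l with rfl | hne
  · exact ⟨hli, by rw [eq_div_iff (hb.diag_ne_zero hcd k), hl]⟩
  exfalso
  have hkli : PassesThrough b k l i := by
    refine le_antisymm ?_ (hb.mul_le_mul_diag hE k l i)
    calc b k i * b l l = b k l * (c' l i * b l l) := by rw [hl]; ring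
      _ ≤ b k l * b l i := mul_le_mul_right ((isRecML_row_of_forall hrep l).mul_le hli) _
  have hli' : b l i ≠ 0 := (hkli.ne_zero hk (hb.diag_ne_zero hcd l)).2
  obtain ⟨m, hmi, hlmi⟩ := hb.exists_edge_passesThrough hE hli' (hE'.ne_of_edge hli)
  have hkm : anc E k m := by
    rcases hb.eq_or_anc_of_ne_zero (hlmi.ne_zero hli' (hb.diag_ne_zero hcd m)).1 with rfl | hlm
    · exact hb.anc_of_ne_zero hkl hne
    · exact (hb.anc_of_ne_zero hkl hne).trans hlm
  exact (hb.minEdge_iff hE hcd hki hk).1 hmin m hkm hmi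
    (hb.passesThrough_trans hE hkli hlmi (hb.diag_ne_zero hcd l))

end Representation

theorem stmt11_general {d : ℕ} (E : Fin d → Fin d → Prop) (hE : Acyclic E)
    (c : Fin d → Fin d → ℝ≥0) (hcd : ∀ i, 0 < c i i)
    (b : Fin d → Fin d → ℝ≥0) (hb : IsMLMatrix E c b) :
    let edgeB : Fin d → Fin d → Prop := fun k i => E k i ∧
      (Finset.univ.sup fun l =>
        if anc E k l ∧ E l i then b k l * b l i / b l l else 0) < b k i
    (∀ z x : Fin d → ℝ≥0, IsRecML E c z x → ∀ i, x i =
      (Finset.univ.sup fun k => if edgeB k i then (b k i / b k k) * x k else 0) ⊔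
        b i i * z i) ∧
    (∀ (E' : Fin d → Fin d → Prop) (c' : Fin d → Fin d → ℝ≥0), Acyclic E' →
      (∀ k i, E' k i → 0 < c' k i) → (∀ i, 0 < c' i i) →
      (∀ z : Fin d → ℝ≥0,
        IsRecML E' c' z fun i => Finset.univ.sup fun j => b j i * z j) →
      (∀ k i, edgeB k i → E' k i) ∧ (∀ i, c' i i = b i i) ∧
        (∀ k i, edgeB k i → c' k i = b k i / b k k)) :=
  ⟨fun _ _ hx => hx.eq_sup_minEdge hE hcd hb,
    fun _ _ hE' _ _ hrep =>
      ⟨fun _ _ hki => (MinEdge.edge_and_eq_of_forall_isRecML hE hcd hb hE' hrep hki).1,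
        diag_eq_of_forall_isRecML hE' hcd hb hrep,
        fun _ _ hki => (MinEdge.edge_and_eq_of_forall_isRecML hE hcd hb hE' hrep hki).2⟩⟩

/-- (1) For every `z`, the recursive max-linear values `x` on `𝒟` satisfy
`x i = max (max_{k ∈ pa^B(i)} (b k i / b k k) * x k) (b i i * z i)` where `pa^B(i)` are the
parents of `i` in the minimum ML DAG `𝒟^B`; thus the model is a recursive ML model on `𝒟^B`
with weights `c k i = b k i / b k k` and `c i i = b i i`.
(2) For any DAG `𝒟' = (V, E')` with positive weights `c'` whose recursive max-linear values
equal `max_j b j i * z j` for every `z`, one has `E^B ⊆ E'`, `c' i i = b i i`, and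
`c' k i = b k i / b k k` for `(k,i) ∈ E^B`; hence `𝒟^B` has the minimum number of edges. -/
theorem stmt11 {d : ℕ} (hd : 1 ≤ d) (E : Fin d → Fin d → Prop) (hE : Acyclic E)
    (c : Fin d → Fin d → ℝ≥0) (hcd : ∀ i, 0 < c i i) (hce : ∀ k i, E k i → 0 < c k i)
    (b : Fin d → Fin d → ℝ≥0) (hb : IsMLMatrix E c b) :
    let edgeB : Fin d → Fin d → Prop := fun k i => E k i ∧
      (Finset.univ.sup fun l =>
        if anc E k l ∧ E l i then b k l * b l i / b l l else 0) < b k i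
    (∀ z x : Fin d → ℝ≥0, IsRecML E c z x → ∀ i, x i =
      (Finset.univ.sup fun k => if edgeB k i then (b k i / b k k) * x k else 0) ⊔
        b i i * z i) ∧
    (∀ (E' : Fin d → Fin d → Prop) (c' : Fin d → Fin d → ℝ≥0), Acyclic E' →
      (∀ k i, E' k i → 0 < c' k i) → (∀ i, 0 < c' i i) →
      (∀ z : Fin d → ℝ≥0,
        IsRecML E' c' z fun i => Finset.univ.sup fun j => b j i * z j) →
      (∀ k i, edgeB k i → E' k i) ∧ (∀ i, c' i i = b i i) ∧
        (∀ k i, edgeB k i → c' k i = b k i / b k k)) :=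
  stmt11_general E hE c hcd b hb
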